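/- arXiv:1604.07743 — 2 statements merged into one kernel-verified Lean document; each statement's English description precedes it below -/
import Mathlib

section
/- For every infinite cardinal μ there exist linear orders I₀ ⊆ I such that |I₀| = μ, |I| = μ⁺, and I₀ is dense in I (i.e., for all i < j in I there exists k ∈ I₀ with i < k < j). Concretely, letting χ be least such that μ < μ^χ, the set of functions μ^{<χ} ordered lexicographically sits densely inside a subset of μ^{≤χ} of cardinality μ⁺ ordered lexicographically. -/
/-!
Let `χ` be least with `μ < μ ^ χ`; it is infinite, `χ ≤ μ` and `μ ^ κ ≤ μ` for all `κ < χ`.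
Inside the lexicographically ordered `χ → μ`, the functions equal to a fixed `z` beyond some
point (this models `μ^{<χ}`) number `∑_{a < χ} μ ^ |a + 1| ≤ χ · μ = μ`, and they are dense:
if `i < j` first differ at `δ`, pick any `ε > δ` and let `k` copy `i` below `ε`, exceed `i ε`
at `ε`, and be `z` afterwards; then `i < k < j`. Any set of size `μ⁺ ≤ μ ^ χ` of
functions containing them is the required `I`.
-/

universe u

open Cardinal Set

section BoundedSupport

variable {α β : Type u}

def boundedSupport [Preorder α] (z : β) : Set (Lex (α → β)) :=
  {f | BddAbove {a | ofLex f a ≠ z}}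

theorem exists_mem_boundedSupport_between [Preorder α] [NoMaxOrder α] [LT β] [NoMaxOrder β]
    (z : β) {i j : Lex (α → β)} (hij : i < j) :
    ∃ k ∈ boundedSupport z, i < k ∧ k < j := by
  classical
  obtain ⟨δ, hagree, hδ⟩ := hij
  obtain ⟨ε, hδε⟩ := exists_gt δ
  obtain ⟨m, hm⟩ := exists_gt (ofLex i ε)
  let k : Lex (α → β) := toLex fun b => if b < ε then ofLex i b else if b = ε then m else z
  have hk_lt : ∀ b < ε, ofLex k b = ofLex i b := fun b hb => if_pos hb
  have hk_eq : ofLex k ε = m := by simp [k]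
  refine ⟨k, ⟨ε, fun b hb => ?_⟩, ⟨ε, fun b hb => (hk_lt b hb).symm, ?_⟩,
    ⟨δ, fun b hb => (hk_lt b (hb.trans hδε)).trans (hagree b hb), ?_⟩⟩
  · by_contra hbε
    refine hb ?_
    simp only [k, ofLex_toLex]
    rw [if_neg fun h => hbε h.le, if_neg fun h => hbε h.le]
  · change ofLex i ε < ofLex k ε
    rwa [hk_eq]
  · change ofLex k δ < ofLex j δ
    rw [hk_lt δ hδε]
    exact hδ

theorem mk_le_mk_boundedSupport [Preorder α] [Nonempty α] (z : β) :
    #β ≤ #(boundedSupport (α := α) z) := by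
  classical
  obtain ⟨a₀⟩ := ‹Nonempty α›
  have hmem (m : β) : toLex (Function.update (fun _ => z) a₀ m) ∈ boundedSupport z :=
    ⟨a₀, fun b hb => not_not.1 fun h =>
      hb (Function.update_of_ne (β := fun _ => β) (fun e => h e.le) m (fun _ => z))⟩
  let f : β → boundedSupport (α := α) z := fun m => ⟨_, hmem m⟩
  refine mk_le_of_injective (f := f) fun m m' h => ?_
  simpa [f] using congrFun (congrArg ofLex (Subtype.ext_iff.1 h)) a₀

theorem mk_boundedSupport_le_sum [Preorder α] (z : β) :
    #(boundedSupport (α := α) z) ≤ sum fun a : α => #β ^ #(Iic a) := by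
  choose bound hbound using fun f : boundedSupport (α := α) z => f.2
  let F : boundedSupport (α := α) z → Σ a : α, (Iic a → β) :=
    fun f => ⟨bound f, fun b => ofLex f.1 b⟩
  have hF : Function.Injective F := by
    rintro f g hfg
    obtain ⟨hfg_bound, hfg_restrict⟩ := Sigma.mk.inj_iff.1 hfg
    refine Subtype.ext (ofLex.injective (funext fun b => ?_))
    rw [← hfg_bound] at hfg_restrict
    by_cases hb : b ≤ bound f
    · exact congrFun (eq_of_heq hfg_restrict) ⟨b, hb⟩
    · have hfb : ofLex f.1 b = z := not_not.1 fun h => hb (hbound f h)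
      have hgb : ofLex g.1 b = z := not_not.1 fun h => hb (hfg_bound ▸ hbound g h)
      rw [hfb, hgb]
  calc #(boundedSupport (α := α) z) ≤ #(Σ a : α, (Iic a → β)) := mk_le_of_injective hF
    _ = sum fun a : α => #β ^ #(Iic a) := by simp only [mk_sigma, power_def]

end BoundedSupport

namespace Cardinal

theorem exists_minimal_power_gt {μ : Cardinal.{u}} (hμ : ℵ₀ ≤ μ) :
    ∃ χ, ℵ₀ ≤ χ ∧ χ ≤ μ ∧ μ < μ ^ χ ∧ ∀ κ < χ, μ ^ κ ≤ μ := by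
  have hμμ : μ < μ ^ μ := cantor' μ (one_lt_aleph0.trans_le hμ)
  obtain ⟨χ, hχ : μ < μ ^ χ, hχmin⟩ := wellFounded_lt.has_min {κ | μ < μ ^ κ} ⟨μ, hμμ⟩
  have hle (κ) (hκ : κ < χ) : μ ^ κ ≤ μ := not_lt.1 fun h => hχmin κ h hκ
  refine ⟨χ, ?_, not_lt.1 (hχmin μ hμμ), hχ, hle⟩
  by_contra! hfin
  obtain ⟨n, rfl⟩ := lt_aleph0.1 hfin
  rcases n.eq_zero_or_pos with rfl | hn
  · exact (one_lt_aleph0.trans_le hμ).not_ge (by simpa using hχ.le)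
  · rw [power_natCast, power_nat_eq hμ hn] at hχ
    exact hχ.false

theorem mk_Iic_ord_toType_lt {c : Cardinal.{u}} (hc : ℵ₀ ≤ c) (a : c.ord.ToType) :
    #(Iic a) < c := by
  rw [← Iio_insert]
  exact mk_insert_le.trans_lt
    (add_lt_of_lt hc (by simpa using mk_Iio_lt a) (one_lt_aleph0.trans_le hc))

theorem exists_superset_mk_eq {α : Type u} {s : Set α} {κ : Cardinal.{u}} (hs : #s ≤ κ)
    (hκ : ℵ₀ ≤ κ) (hκα : κ ≤ #α) : ∃ t, s ⊆ t ∧ #t = κ := by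
  obtain ⟨t, ht⟩ := le_mk_iff_exists_set.1 hκα
  refine ⟨s ∪ t, subset_union_left, le_antisymm ?_ (ht ▸ mk_le_mk_of_subset subset_union_right)⟩
  calc #(s ∪ t : Set α) ≤ #s + #t := mk_union_le s t
    _ ≤ κ + κ := add_le_add hs ht.le
    _ = κ := add_eq_self hκ

end Cardinal

theorem mk_boundedSupport_ord_toType_le {β : Type u} (z : β) {χ : Cardinal.{u}} (hχ : ℵ₀ ≤ χ)
    (hχβ : χ ≤ #β) (hpow : ∀ κ < χ, #β ^ κ ≤ #β) :
    #(boundedSupport (α := χ.ord.ToType) z) ≤ #β :=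
  calc #(boundedSupport (α := χ.ord.ToType) z)
      _ ≤ sum fun a : χ.ord.ToType => #β ^ #(Iic a) := mk_boundedSupport_le_sum z
      _ ≤ sum fun _ : χ.ord.ToType => #β :=
        sum_le_sum _ _ fun a => hpow _ (mk_Iic_ord_toType_lt hχ a)
      _ = χ * #β := by rw [sum_const', mk_ord_toType]
      _ ≤ #β := mul_le_of_le (hχ.trans hχβ) hχβ le_rfl

/-- For every infinite cardinal `μ` there are linear orders `I₀ ⊆ I` with `|I₀| = μ`,
`|I| = μ⁺`, and `I₀` dense in `I`. -/
theorem exists_dense_suborder (μ : Cardinal.{u}) (hμ : ℵ₀ ≤ μ) :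
    ∃ (I : Type u) (_ : LinearOrder I) (I₀ : Set I),
      #↥I₀ = μ ∧ #I = Order.succ μ ∧
        ∀ i j : I, i < j → ∃ k ∈ I₀, i < k ∧ k < j := by
  obtain ⟨χ, hχ, hχμ, hμχ, hpow⟩ := exists_minimal_power_gt hμ
  have : NoMaxOrder χ.ord.ToType := noMaxOrder hχ
  have : NoMaxOrder μ.ord.ToType := noMaxOrder hμ
  have : Nonempty χ.ord.ToType := mk_ne_zero_iff.1 (by simpa using (aleph0_pos.trans_le hχ).ne')
  obtain ⟨z⟩ : Nonempty μ.ord.ToType :=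
    mk_ne_zero_iff.1 (by simpa using (aleph0_pos.trans_le hμ).ne')
  set D := boundedSupport (α := χ.ord.ToType) z
  have hD : #D = μ := by
    refine le_antisymm ?_ ?_
    · simpa using mk_boundedSupport_ord_toType_le z hχ (by simpa) (by simpa)
    · simpa using mk_le_mk_boundedSupport (α := χ.ord.ToType) z
  have hsucc : Order.succ μ ≤ #(Lex (χ.ord.ToType → μ.ord.ToType)) := by
    rw [mk_congr ofLex]
    simpa using Order.succ_le_of_lt hμχ
  obtain ⟨S, hDS, hS⟩ := exists_superset_mk_eq (hD.trans_le (Order.le_succ μ))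
    (hμ.trans (Order.le_succ μ)) hsucc
  refine ⟨S, inferInstance, Subtype.val ⁻¹' D, ?_, hS, fun i j hij => ?_⟩
  · rw [mk_preimage_of_injective_of_subset_range _ _ Subtype.val_injective (by simpa), hD]
  · obtain ⟨k, hkD, hik, hkj⟩ := exists_mem_boundedSupport_between _ (Subtype.mk_lt_mk.1 hij)
    exact ⟨⟨k, hDS hkD⟩, hkD, hik, hkj⟩
end

section
/- Let K be an AEC semisolvable in λ > LS(K). Then for every M ∈ K of cardinality λ and every A ⊆ |M| with |A| = μ, where μ ≥ LS(K), μ = μ^κ, and μ < λ, the number of Galois types of κ-tuples over A computed in M is at most μ: |gS^κ(A; M)| ≤ μ. -/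
universe u v w

open FirstOrder Cardinal Set

/-- A bundled structure in the vocabulary `τ`. -/
structure ModelOf (τ : FirstOrder.Language.{u, u}) : Type (u + 1) where
  carrier : Type u
  str : τ.Structure carrier

attribute [instance] ModelOf.str

/-- An abstract elementary class: a class of `τ`-structures together with a strong
substructure relation `SSub` (with distinguished inclusion embeddings `incl`),
satisfying the axioms of AECs. -/
structure AEC : Type (u + 1) where
  τ : FirstOrder.Language.{u, u}
  Mem : Set (ModelOf.{u} τ)
  SSub : ModelOf.{u} τ → ModelOf.{u} τ → Prop
  incl : ∀ {M N : ModelOf.{u} τ}, SSub M N → (M.carrier ↪[τ] N.carrier)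
  ssub_mem : ∀ {M N : ModelOf.{u} τ}, SSub M N → M ∈ Mem ∧ N ∈ Mem
  ssub_refl : ∀ M ∈ Mem, SSub M M
  incl_refl : ∀ (M : ModelOf.{u} τ) (h : SSub M M) (x : M.carrier), incl h x = x
  ssub_trans : ∀ {M N P : ModelOf.{u} τ}, SSub M N → SSub N P → SSub M P
  incl_trans : ∀ {M N P : ModelOf.{u} τ} (h₁ : SSub M N) (h₂ : SSub N P) (x : M.carrier),
    incl (ssub_trans h₁ h₂) x = incl h₂ (incl h₁ x)
  iso_closed : ∀ {M N : ModelOf.{u} τ}, M ∈ Mem → Nonempty (M.carrier ≃[τ] N.carrier) → N ∈ Mem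
  LS : Cardinal.{u}
  infinite_LS : ℵ₀ ≤ LS
  card_τ_le : τ.card ≤ LS
  downward_LST : ∀ N ∈ Mem, ∀ A : Set N.carrier,
    ∃ (M : ModelOf.{u} τ) (h : SSub M N), A ⊆ Set.range (incl h) ∧ #M.carrier ≤ #↥A + LS
  chains : ∀ (δ : Ordinal.{u}), Order.IsSuccLimit δ → ∀ C : Ordinal.{u} → ModelOf.{u} τ,
    (∀ i j : Ordinal.{u}, i < j → j < δ → SSub (C i) (C j)) →
    ∃ (M : ModelOf.{u} τ) (h : ∀ i < δ, SSub (C i) M),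
      ∀ x : M.carrier, ∃ (i : Ordinal.{u}) (hi : i < δ), x ∈ Set.range (incl (h i hi))

namespace AEC

variable (K : AEC.{u})

/-- `f` is a `K`-embedding: it is an isomorphism onto a strong substructure of its codomain. -/
def IsKEmb {M N : ModelOf.{u} K.τ} (f : M.carrier ↪[K.τ] N.carrier) : Prop :=
  ∃ (P : ModelOf.{u} K.τ) (h : K.SSub P N) (e : M.carrier ≃[K.τ] P.carrier),
    ∀ x, K.incl h (e x) = f x

/-- A "pre-type": an `α`-tuple in a model of `K`, over a base set enumerated by `β`. -/
structure PTy (K : AEC.{u}) (α : Type v) (β : Type w) : Type (max (u + 1) v w) where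
  N : ModelOf.{u} K.τ
  mem : N ∈ K.Mem
  base : β → N.carrier
  t : α → N.carrier

/-- Atomic equivalence of pre-types: the tuples can be mapped to each other by a pair of
`K`-embeddings into a common extension fixing the base. -/
def gtpAtom {α : Type v} {β : Type w} (p q : PTy K α β) : Prop :=
  ∃ (R : ModelOf.{u} K.τ) (_ : R ∈ K.Mem)
    (f : p.N.carrier ↪[K.τ] R.carrier) (g : q.N.carrier ↪[K.τ] R.carrier),
    K.IsKEmb f ∧ K.IsKEmb g ∧ (∀ x, f (p.base x) = g (q.base x)) ∧ ∀ x, f (p.t x) = g (q.t x)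

/-- Equality of Galois (orbital) types: the transitive closure of atomic equivalence. -/
def GtpEq {α : Type v} {β : Type w} : PTy K α β → PTy K α β → Prop :=
  Relation.EqvGen (K.gtpAtom)

/-- `gtp (b / A; N) = gtp (c / A; N)`: equality of Galois types over a set `A`,
both computed in `N`. -/
def gtpEqOver {N : ModelOf.{u} K.τ} (hN : N ∈ K.Mem) (A : Set N.carrier)
    {α : Type v} (b c : α → N.carrier) : Prop :=
  K.GtpEq (⟨N, hN, Subtype.val, b⟩ : PTy K α ↥A) ⟨N, hN, Subtype.val, c⟩

/-- The number of Galois types of `α`-tuples over the set `A` as computed in `N`. -/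
noncomputable def gSCard {N : ModelOf.{u} K.τ} (hN : N ∈ K.Mem) (A : Set N.carrier)
    (α : Type u) : Cardinal.{u} :=
  #(Quot (fun b c : α → N.carrier => K.gtpEqOver hN A b c))

/-- `N` has the `(κ, μ)`-order property of length `θ`. -/
def HasOrderPropLen (N : ModelOf.{u} K.τ) (hN : N ∈ K.Mem) (κ μ θ : Cardinal.{u}) : Prop :=
  ∃ A : Set N.carrier, #↥A ≤ μ ∧
    ∃ a : θ.ord.ToType → κ.ord.ToType → N.carrier,
      ∀ i₀ i₁ j₀ j₁ : θ.ord.ToType, i₀ < i₁ → j₀ < j₁ →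
        ¬ K.gtpEqOver hN A (Sum.elim (a i₀) (a i₁)) (Sum.elim (a j₁) (a j₀))

/-- `K` has the `(κ, μ)`-order property of length `θ`. -/
def ClassOrderPropLen (κ μ θ : Cardinal.{u}) : Prop :=
  ∃ (N : ModelOf.{u} K.τ) (hN : N ∈ K.Mem), K.HasOrderPropLen N hN κ μ θ

/-- `K` has the `(κ, μ)`-order property (of every length). -/
def ClassOrderProp (κ μ : Cardinal.{u}) : Prop :=
  ∀ θ : Cardinal.{u}, K.ClassOrderPropLen κ μ θ

/-- `K` has arbitrarily large models. -/
def HasArbLarge : Prop := ∀ c : Cardinal.{u}, ∃ M ∈ K.Mem, c ≤ #M.carrier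

end AEC

/-- An EM blueprint `Φ` proper for linear orders for the AEC `K`: a vocabulary `τΦ ⊇ τ(K)`
together with a functorial assignment of EM models `EM (I, Φ)` generated by order
indiscernibles, whose `τ(K)`-reducts are members of `K`, functorially in `I`. -/
structure EMBlueprint (K : AEC.{u}) : Type (u + 1) where
  τΦ : FirstOrder.Language.{u, u}
  lhom : K.τ →ᴸ τΦ
  EM : (I : Type u) → [inst : LinearOrder I] → ModelOf.{u} τΦ
  emMap : (I : Type u) → [inst : LinearOrder I] → (I ↪ (EM I).carrier)
  /-- `EM (I, Φ)` is generated by the spine `I`. -/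
  gen : ∀ (I : Type u) [LinearOrder I],
    FirstOrder.Language.Substructure.closure τΦ (Set.range (emMap I)) = ⊤
  /-- the spine is a sequence of quantifier-free order indiscernibles, uniformly in `I`. -/
  indisc : ∀ (I J : Type u) [LinearOrder I] [LinearOrder J] (n : ℕ)
    (ii : Fin n → I) (jj : Fin n → J), StrictMono ii → StrictMono jj →
    ∀ φ : τΦ.Formula (Fin n), φ.IsQF →
      (φ.Realize (fun k => emMap I (ii k)) ↔ φ.Realize (fun k => emMap J (jj k)))
  red_mem : ∀ (I : Type u) [LinearOrder I],
    (⟨(EM I).carrier, lhom.reduct (EM I).carrier⟩ : ModelOf.{u} K.τ) ∈ K.Mem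
  card_le : ∀ (I : Type u) [LinearOrder I],
    #(EM I).carrier ≤ max #I (max τΦ.card K.LS)
  emb : ∀ (I J : Type u) [LinearOrder I] [LinearOrder J], (I ↪o J) →
    ((EM I).carrier ↪[τΦ] (EM J).carrier)
  emb_emMap : ∀ (I J : Type u) [LinearOrder I] [LinearOrder J] (f : I ↪o J) (i : I),
    emb I J f (emMap I i) = emMap J (f i)
  red_ssub : ∀ (I J : Type u) [LinearOrder I] [LinearOrder J] (f : I ↪o J),
    ∃ g : @FirstOrder.Language.Embedding K.τ (EM I).carrier (EM J).carrier
        (lhom.reduct _) (lhom.reduct _),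
      K.IsKEmb (M := ⟨(EM I).carrier, lhom.reduct _⟩) (N := ⟨(EM J).carrier, lhom.reduct _⟩) g ∧
      ∀ x, g x = emb I J f x

/-- `EM_{τ(K)} (I, Φ)`: the `τ(K)`-reduct of the EM model. -/
def EMBlueprint.red {K : AEC.{u}} (Φ : EMBlueprint K) (I : Type u) [LinearOrder I] :
    ModelOf.{u} K.τ :=
  ⟨(Φ.EM I).carrier, Φ.lhom.reduct (Φ.EM I).carrier⟩

theorem EMBlueprint.red_mem' {K : AEC.{u}} (Φ : EMBlueprint K) (I : Type u) [LinearOrder I] :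
    Φ.red I ∈ K.Mem := Φ.red_mem I

/-- `Υ_μ[K]`: the set of EM blueprints for `K` with vocabulary of size at most `μ`. -/
def Upsilon (K : AEC.{u}) (μ : Cardinal.{u}) : Set (EMBlueprint K) :=
  {Φ | Φ.τΦ.card ≤ μ}

namespace AEC

variable (K : AEC.{u})

/-- `⟨a i : i ∈ I⟩` is a strictly indiscernible sequence of `α`-tuples in `N`. -/
def StrictlyIndisc {N : ModelOf.{u} K.τ} (_hN : N ∈ K.Mem) {I : Type u} [LinearOrder I]
    {α : Type v} (a : I → α → N.carrier) : Prop :=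
  ∃ (Φ : EMBlueprint K) (f : N.carrier ↪[K.τ] (Φ.red I).carrier),
    K.IsKEmb f ∧ ∀ j : α, ∃ ρ : Φ.τΦ.Functions 1,
      ∀ i : I, f (a i j) =
        FirstOrder.Language.Structure.funMap (M := (Φ.EM I).carrier) ρ ![Φ.emMap I i]

/-- Strict indiscernibility over a set `A`: some enumeration of `A` appended to each tuple
yields a strictly indiscernible sequence. -/
def StrictlyIndiscOver {N : ModelOf.{u} K.τ} (hN : N ∈ K.Mem) {I : Type u} [LinearOrder I]
    {α : Type v} (a : I → α → N.carrier) (A : Set N.carrier) : Prop :=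
  ∃ (β : Type u) (e : β → N.carrier), Set.range e = A ∧
    K.StrictlyIndisc hN (fun i => Sum.elim (a i) e)

/-- `⟨a i : i ∈ I⟩` is indiscernible over `A` in `N` (with respect to Galois types). -/
def IndiscOver {N : ModelOf.{u} K.τ} (hN : N ∈ K.Mem) {I : Type u} [LinearOrder I]
    {α : Type v} (a : I → α → N.carrier) (A : Set N.carrier) : Prop :=
  ∀ (n : ℕ) (ii jj : Fin n → I), StrictMono ii → StrictMono jj →
    K.gtpEqOver hN A (fun p : Fin n × α => a (ii p.1) p.2) (fun p : Fin n × α => a (jj p.1) p.2)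

end AEC
namespace AEC

variable (K : AEC.{u})

/-- `M` is universal in `K_lam`: every model of cardinality `lam` `K`-embeds into it. -/
def UniversalIn (M : ModelOf.{u} K.τ) (lam : Cardinal.{u}) : Prop :=
  M ∈ K.Mem ∧ #M.carrier = lam ∧
    ∀ N ∈ K.Mem, #N.carrier = lam →
      ∃ f : N.carrier ↪[K.τ] M.carrier, K.IsKEmb f

/-- `K` is semisolvable in `lam`: some EM blueprint with vocabulary of size `≤ LS (K)`
produces universal models in `K_lam` over every linear order of cardinality `lam`. -/
def Semisolvable (lam : Cardinal.{u}) : Prop :=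
  ∃ Φ ∈ Upsilon K K.LS, ∀ (I : Type u) (_ : LinearOrder I), #I = lam →
    K.UniversalIn (Φ.red I) lam

/-- `M` has a proper strong extension. -/
def HasProperExt (M : ModelOf.{u} K.τ) : Prop :=
  ∃ (N : ModelOf.{u} K.τ) (h : K.SSub M N), Set.range (K.incl h) ≠ Set.univ

/-- `M` is superlimit in `lam`. -/
def Superlimit (M : ModelOf.{u} K.τ) (lam : Cardinal.{u}) : Prop :=
  K.UniversalIn M lam ∧ K.HasProperExt M ∧
    ∀ (δ : Ordinal.{u}), Order.IsSuccLimit δ → δ < (Order.succ lam).ord →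
      ∀ (C : Ordinal.{u} → ModelOf.{u} K.τ)
        (hC : ∀ i j : Ordinal.{u}, i ≤ j → j ≤ δ → K.SSub (C i) (C j)),
        (∀ i ≤ δ, #(C i).carrier = lam) →
        (∀ (i : Ordinal.{u}) (hiδ : i ≤ δ), Order.IsSuccLimit i →
          ∀ x : (C i).carrier, ∃ j : Ordinal.{u}, ∃ hj : j < i,
            x ∈ Set.range (K.incl (hC j i hj.le hiδ))) →
        (∀ i < δ, Nonempty ((C i).carrier ≃[K.τ] M.carrier)) →
        Nonempty ((C δ).carrier ≃[K.τ] M.carrier)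

/-- `K` is solvable in `lam`, witnessed by `Φ`. -/
def SolvableWith (Φ : EMBlueprint K) (lam : Cardinal.{u}) : Prop :=
  Φ ∈ Upsilon K K.LS ∧ ∀ (I : Type u) (_ : LinearOrder I), #I = lam →
    K.Superlimit (Φ.red I) lam

/-- `K` is solvable in `lam`. -/
def Solvable (lam : Cardinal.{u}) : Prop := ∃ Φ : EMBlueprint K, K.SolvableWith Φ lam

/-- `K` is categorical in `lam`. -/
def Categorical (lam : Cardinal.{u}) : Prop :=
  (∃ M ∈ K.Mem, #M.carrier = lam) ∧
    ∀ M ∈ K.Mem, ∀ N ∈ K.Mem, #M.carrier = lam → #N.carrier = lam →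
      Nonempty (M.carrier ≃[K.τ] N.carrier)

/-- `M` is `μ`-(Galois-)saturated: every Galois type over a strong substructure of
cardinality `< μ` is realized in `M`. -/
def Saturated (M : ModelOf.{u} K.τ) (hM : M ∈ K.Mem) (μ : Cardinal.{u}) : Prop :=
  ∀ (N : ModelOf.{u} K.τ) (hNM : K.SSub N M), #N.carrier < μ →
    ∀ (W : ModelOf.{u} K.τ) (hNW : K.SSub N W) (a : W.carrier),
      ∃ b : M.carrier,
        K.GtpEq (⟨W, (K.ssub_mem hNW).2, K.incl hNW, fun _ : PUnit.{u + 1} => a⟩ :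
            PTy K PUnit.{u + 1} N.carrier)
          ⟨M, hM, K.incl hNM, fun _ => b⟩

/-- `K_{< lam}` has amalgamation. -/
def AmalgamationBelow (lam : Cardinal.{u}) : Prop :=
  ∀ (M₀ M₁ M₂ : ModelOf.{u} K.τ) (h₁ : K.SSub M₀ M₁) (h₂ : K.SSub M₀ M₂),
    #M₀.carrier < lam → #M₁.carrier < lam → #M₂.carrier < lam →
    ∃ (N : ModelOf.{u} K.τ) (_ : N ∈ K.Mem)
      (f : M₁.carrier ↪[K.τ] N.carrier) (g : M₂.carrier ↪[K.τ] N.carrier),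
      K.IsKEmb f ∧ K.IsKEmb g ∧ ∀ x : M₀.carrier, f (K.incl h₁ x) = g (K.incl h₂ x)

/-- `K_{< lam}` has no maximal models. -/
def NoMaxBelow (lam : Cardinal.{u}) : Prop :=
  ∀ M ∈ K.Mem, #M.carrier < lam → K.HasProperExt M

/-- `K_μ` has joint embedding. -/
def JEPAt (μ : Cardinal.{u}) : Prop :=
  ∀ M ∈ K.Mem, ∀ N ∈ K.Mem, #M.carrier = μ → #N.carrier = μ →
    ∃ (P : ModelOf.{u} K.τ) (_ : P ∈ K.Mem)
      (f : M.carrier ↪[K.τ] P.carrier) (g : N.carrier ↪[K.τ] P.carrier),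
      K.IsKEmb f ∧ K.IsKEmb g

/-- `K_μ` has amalgamation. -/
def AmalgamationAt (μ : Cardinal.{u}) : Prop :=
  ∀ (M₀ M₁ M₂ : ModelOf.{u} K.τ) (h₁ : K.SSub M₀ M₁) (h₂ : K.SSub M₀ M₂),
    #M₀.carrier = μ → #M₁.carrier = μ → #M₂.carrier = μ →
    ∃ (N : ModelOf.{u} K.τ) (_ : N ∈ K.Mem)
      (f : M₁.carrier ↪[K.τ] N.carrier) (g : M₂.carrier ↪[K.τ] N.carrier),
      K.IsKEmb f ∧ K.IsKEmb g ∧ ∀ x : M₀.carrier, f (K.incl h₁ x) = g (K.incl h₂ x)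

/-- `K_μ` has no maximal models. -/
def NoMaxAt (μ : Cardinal.{u}) : Prop :=
  ∀ M ∈ K.Mem, #M.carrier = μ → K.HasProperExt M

/-- `M` is universal over `M₀` (both of cardinality `μ`). -/
def UniversalOver (μ : Cardinal.{u}) (M M₀ : ModelOf.{u} K.τ) : Prop :=
  ∃ h : K.SSub M₀ M, #M.carrier = μ ∧ #M₀.carrier = μ ∧
    ∀ (N : ModelOf.{u} K.τ) (hN : K.SSub M₀ N), #N.carrier = μ →
      ∃ f : N.carrier ↪[K.τ] M.carrier, K.IsKEmb f ∧
        ∀ x : M₀.carrier, f (K.incl hN x) = K.incl h x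

/-- `M` is a `(μ, δ)`-limit model over `M₀` for some limit `δ < μ⁺`. -/
def IsLimitOver (μ : Cardinal.{u}) (M M₀ : ModelOf.{u} K.τ) : Prop :=
  ∃ δ : Ordinal.{u}, Order.IsSuccLimit δ ∧ δ < (Order.succ μ).ord ∧
    ∃ (C : Ordinal.{u} → ModelOf.{u} K.τ)
      (hC : ∀ i j : Ordinal.{u}, i ≤ j → j ≤ δ → K.SSub (C i) (C j)),
      C 0 = M₀ ∧ C δ = M ∧ (∀ i ≤ δ, #(C i).carrier = μ) ∧
      (∀ i < δ, K.UniversalOver μ (C (i + 1)) (C i)) ∧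
      ∀ (i : Ordinal.{u}) (hiδ : i ≤ δ), Order.IsSuccLimit i → ∀ x : (C i).carrier,
        ∃ (j : Ordinal.{u}) (hj : j < i), x ∈ Set.range (K.incl (hC j i hj.le hiδ))

/-- `gtp (a / M; W)` `μ`-splits over `N`, where `N ≤ M ≤ W` and `a ∈ W`. -/
def MuSplits (μ : Cardinal.{u}) {W M N : ModelOf.{u} K.τ} (hW : W ∈ K.Mem)
    (hMW : K.SSub M W) (_hNM : K.SSub N M) (a : W.carrier) : Prop :=
  ∃ (M₁ M₂ : ModelOf.{u} K.τ) (h₁ : K.SSub M₁ M) (h₂ : K.SSub M₂ M)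
    (_hN₁ : K.SSub N M₁) (_hN₂ : K.SSub N M₂),
    #M₁.carrier = μ ∧ #M₂.carrier = μ ∧
    ∃ f : M₁.carrier ≃[K.τ] M₂.carrier, K.IsKEmb f.toEmbedding ∧
      (∀ x : N.carrier, f (K.incl _hN₁ x) = K.incl _hN₂ x) ∧
      ¬ K.GtpEq
        (⟨W, hW, K.incl (K.ssub_trans h₁ hMW), fun _ : PUnit.{u + 1} => a⟩ :
          PTy K PUnit.{u + 1} M₁.carrier)
        ⟨W, hW, fun x => K.incl (K.ssub_trans h₂ hMW) (f x), fun _ => a⟩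

/-- `gtp (a / M₀; W)` is algebraic: `a` is an element of `M₀`. -/
def Algebraic {W M₀ : ModelOf.{u} K.τ} (h : K.SSub M₀ W) (a : W.carrier) : Prop :=
  a ∈ Set.range (K.incl h)

/-- A Galois type over the model `M`: a pair of an extension of `M` and an element of it. -/
def STyOver (M : ModelOf.{u} K.τ) : Type (u + 1) :=
  {x : Σ N : ModelOf.{u} K.τ, N.carrier // K.SSub M x.1}

/-- Equality of Galois types over the model `M`. -/
def styEq {M : ModelOf.{u} K.τ} (p q : K.STyOver M) : Prop :=
  K.GtpEq
    (⟨p.1.1, (K.ssub_mem p.2).2, K.incl p.2, fun _ : PUnit.{u + 1} => p.1.2⟩ :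
      PTy K PUnit.{u + 1} M.carrier)
    ⟨q.1.1, (K.ssub_mem q.2).2, K.incl q.2, fun _ => q.1.2⟩

/-- The number of Galois types over the model `M` (as a `Cardinal.{u+1}`). -/
noncomputable def gsModCard (M : ModelOf.{u} K.τ) : Cardinal.{u + 1} :=
  #(Quot (K.styEq (M := M)))

/-- `K` is stable in `μ`. -/
def StableIn (μ : Cardinal.{u}) : Prop :=
  ∀ M ∈ K.Mem, #M.carrier = μ → K.gsModCard M ≤ Cardinal.lift.{u + 1} μ

/-- No long splitting chains in `μ`. -/
def NoLongSplittingChains (μ : Cardinal.{u}) : Prop :=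
  ∀ δ : Ordinal.{u}, Order.IsSuccLimit δ → δ < (Order.succ μ).ord →
    ∀ (C : Ordinal.{u} → ModelOf.{u} K.τ)
      (hC : ∀ i j : Ordinal.{u}, i ≤ j → j ≤ δ → K.SSub (C i) (C j)),
      (∀ i ≤ δ, #(C i).carrier = μ) →
      (∀ i < δ, K.UniversalOver μ (C (i + 1)) (C i)) →
      (∀ x : (C δ).carrier, ∃ (j : Ordinal.{u}) (hj : j < δ),
        x ∈ Set.range (K.incl (hC j δ hj.le le_rfl))) →
      ∀ (W : ModelOf.{u} K.τ) (hW : W ∈ K.Mem) (hCW : K.SSub (C δ) W) (a : W.carrier),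
        ∃ (i : Ordinal.{u}) (hi : i < δ), ¬ K.MuSplits μ hW hCW (hC i δ hi.le le_rfl) a

/-- `K` is `μ`-superstable. -/
def Superstable (μ : Cardinal.{u}) : Prop :=
  K.LS ≤ μ ∧ (∃ M ∈ K.Mem, #M.carrier = μ) ∧ K.JEPAt μ ∧ K.AmalgamationAt μ ∧
    K.NoMaxAt μ ∧ K.StableIn μ ∧ K.NoLongSplittingChains μ

/-- `M₀` is an amalgamation base in `K_μ`. -/
def AmalgBase (μ : Cardinal.{u}) (M₀ : ModelOf.{u} K.τ) : Prop :=
  M₀ ∈ K.Mem ∧ #M₀.carrier = μ ∧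
    ∀ (M₁ M₂ : ModelOf.{u} K.τ) (h₁ : K.SSub M₀ M₁) (h₂ : K.SSub M₀ M₂),
      #M₁.carrier = μ → #M₂.carrier = μ →
      ∃ (N : ModelOf.{u} K.τ) (_ : N ∈ K.Mem)
        (f : M₁.carrier ↪[K.τ] N.carrier) (g : M₂.carrier ↪[K.τ] N.carrier),
        K.IsKEmb f ∧ K.IsKEmb g ∧ ∀ x : M₀.carrier, f (K.incl h₁ x) = g (K.incl h₂ x)

/-- `K` has `μ`-symmetry (with the extra requirement `P N` on the base, used for the
Shelah–Villaveces context; take `P := fun _ => True` for the plain notion). -/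
def HasSymmetryAux (μ : Cardinal.{u}) (P : ModelOf.{u} K.τ → Prop) : Prop :=
  ∀ (N M₀ M W : ModelOf.{u} K.τ) (hW : W ∈ K.Mem) (hMW : K.SSub M W)
    (hNM₀ : K.SSub N M₀) (hM₀M : K.SSub M₀ M) (a : M.carrier) (b : W.carrier),
    P N →
    #N.carrier = μ → #M₀.carrier = μ → #M.carrier = μ →
    K.UniversalOver μ M M₀ → K.IsLimitOver μ M₀ N →
    a ∉ Set.range (K.incl hM₀M) →
    ¬ K.MuSplits μ hW (K.ssub_trans hM₀M hMW) hNM₀ (K.incl hMW a) →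
    ¬ K.Algebraic (K.ssub_trans hM₀M hMW) b →
    ¬ K.MuSplits μ hW hMW hM₀M b →
    ∃ (W' : ModelOf.{u} K.τ) (hWW' : K.SSub W W') (Mb : ModelOf.{u} K.τ)
      (hMb : K.SSub Mb W') (hNMb : K.SSub N Mb),
      K.IsLimitOver μ Mb M₀ ∧ K.incl hWW' b ∈ Set.range (K.incl hMb) ∧
      ¬ K.MuSplits μ (K.ssub_mem hWW').2 hMb hNMb (K.incl hWW' (K.incl hMW a))

/-- `K` has `μ`-symmetry. -/
def HasSymmetry (μ : Cardinal.{u}) : Prop :=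
  K.HasSymmetryAux μ (fun _ => True)

end AEC

/-!
Embed `M` into `EM(I, Φ)` for a well-order `I` of size `λ`. Every element of an EM model is a
`τ(Φ)`-term applied to finitely many points of the spine `I`; let `S ⊆ I` be the at most `μ`
spine points used by the image of `A`. The Galois type over `A` of a `κ`-tuple is then determined
by the terms of its coordinates together with the order type over `S` of the spine points they use:
two tuples with the same such data are exchanged by the images under the EM functor of two order
embeddings `I ↪o J` that agree on `S`. Since `I` is well-ordered, the position of a point relative
to `S` is coded by the least elements of `S` above it, so there are at most `μ ^ κ = μ` such data.
-/

open FirstOrder FirstOrder.Language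

theorem Cardinal.mk_quot_le_of_invariant {α β : Type u} {r : α → α → Prop} (inv : α → β)
    (hinv : ∀ a b, inv a = inv b → r a b) : #(Quot r) ≤ #β := by
  refine mk_le_of_injective (f := fun q => inv q.out) fun q q' hqq' => ?_
  rw [← Quot.out_eq q, ← Quot.out_eq q']
  exact Quot.sound (hinv _ _ hqq')

namespace FirstOrder.Language

/-- For `X` the spine `I` this names an element of `EM(I, Φ)` (see `EMBlueprint.realize`); mapping
the parameters along a labelling of `I` records the shape of that element. -/
abbrev Pattern (L : Language.{u, v}) (X : Type w) : Type (max u w) :=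
  Σ n : ℕ, L.Term (Fin n) × (Fin n → X)

namespace Pattern

variable {L : Language.{u, v}} {X Y : Type*}

def map (g : X → Y) (P : L.Pattern X) : L.Pattern Y := ⟨P.1, P.2.1, g ∘ P.2.2⟩

theorem map_eq_map_iff {P Q : L.Pattern X} {g g' : X → Y} :
    P.map g = Q.map g' ↔ ∃ e : P.1 = Q.1, P.2.1.relabel (Fin.cast e) = Q.2.1 ∧
      ∀ p, g (P.2.2 p) = g' (Q.2.2 (p.cast e)) := by
  obtain ⟨n, t, u⟩ := P
  obtain ⟨m, t', u'⟩ := Q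
  constructor
  · intro h
    obtain ⟨rfl, hrest⟩ := Sigma.mk.inj_iff.1 h
    obtain ⟨rfl, hu⟩ := Prod.mk.inj (eq_of_heq hrest)
    exact ⟨rfl, by simp [Fin.cast_refl, Term.relabel_id], fun p => congrFun hu p⟩
  · rintro ⟨e, ht, hu⟩
    dsimp only at e ht hu
    subst e ht
    simp only [map, Fin.cast_refl, Term.relabel_id]
    exact congrArg _ (congrArg _ (funext hu))

theorem map_congr {P : L.Pattern X} {g g' : X → Y} (h : ∀ p, g (P.2.2 p) = g' (P.2.2 p)) :
    P.map g = P.map g' := by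
  simp only [map, Function.comp_def, h]

theorem card_le {L : Language.{u, u}} {X : Type u} {μ : Cardinal.{u}} (hμ : ℵ₀ ≤ μ)
    (hL : L.card ≤ μ) (hX : #X ≤ μ) : #(L.Pattern X) ≤ μ := by
  have hfun : #(Σ i, L.Functions i) ≤ μ :=
    (Cardinal.mk_le_of_injective (Sum.inl_injective (β := Σ i, L.Relations i))).trans hL
  have hterm (n : ℕ) : #(L.Term (Fin n)) ≤ μ := by
    refine Term.card_le.trans (max_le hμ ?_)
    rw [Cardinal.mk_sum, Cardinal.lift_uzero, Cardinal.mk_fin, Cardinal.lift_natCast]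
    exact Cardinal.add_le_of_le hμ ((Cardinal.natCast_lt_aleph0 (n := n)).le.trans hμ) hfun
  have hargs (n : ℕ) : #(Fin n → X) ≤ μ := by
    rw [Cardinal.mk_arrow, Cardinal.lift_uzero, Cardinal.mk_fin, Cardinal.lift_natCast]
    exact (Cardinal.power_le_power_right hX).trans (Cardinal.power_nat_le hμ)
  rw [Cardinal.mk_sigma]
  calc Cardinal.sum _ ≤ Cardinal.sum fun _ : ℕ => μ := Cardinal.sum_le_sum _ _ fun n => by
        rw [Cardinal.mk_prod, Cardinal.lift_id, Cardinal.lift_id]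
        exact Cardinal.mul_le_of_le hμ (hterm n) (hargs n)
    _ = μ := by simp [hμ]

end Pattern

end FirstOrder.Language

abbrev GapOrder (I : Type u) : Type u := Lex (WithTop I × Lex (Bool × I))

def GapOrder.embed {I : Type u} [LinearOrder I] : I ↪o GapOrder I :=
  OrderEmbedding.ofStrictMono (fun i => toLex (↑i, toLex (true, i))) fun _ _ h =>
    Prod.Lex.toLex_lt_toLex.2 (Or.inl (WithTop.coe_lt_coe.2 h))

theorem GapOrder.embed_apply {I : Type u} [LinearOrder I] (i : I) :
    GapOrder.embed i = toLex ((i : WithTop I), toLex (true, i)) := rfl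

section WellOrder

variable {I : Type u} [LinearOrder I] [WellFoundedLT I]

open Classical in
noncomputable def leastIn (S T : Set I) : WithTop S :=
  if h : (Subtype.val ⁻¹' T : Set S).Nonempty then ↑(wellFounded_lt.min _ h) else ⊤

theorem leastIn_le_iff {S T : Set I} (hT : IsUpperSet T) (a : S) : leastIn S T ≤ a ↔ ↑a ∈ T := by
  unfold leastIn
  split_ifs with h
  · rw [WithTop.coe_le_coe]
    exact ⟨fun ha => hT ha (wellFounded_lt.min_mem _ h),
      fun ha => wellFounded_lt.min_le (show a ∈ Subtype.val ⁻¹' T from ha)⟩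
  · simpa using fun ha => h ⟨a, ha⟩

theorem leastIn_le_leastIn {S T T' : Set I} (hT : IsUpperSet T) (hT' : IsUpperSet T')
    (hTT' : T' ⊆ T) : leastIn S T ≤ leastIn S T' := by
  rcases hleast : leastIn S T' with _ | a
  · exact le_top
  · exact (leastIn_le_iff hT a).2 (hTT' ((leastIn_le_iff hT' a).1 hleast.le))

noncomputable def cutOver (S : Set I) (i : I) : WithTop S × WithTop S :=
  (leastIn S (Set.Ici i), leastIn S (Set.Ioi i))

theorem le_iff_le_of_cutOver_eq {S : Set I} {i j : I} (h : cutOver S i = cutOver S j)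
    {a : I} (ha : a ∈ S) : (i ≤ a ↔ j ≤ a) ∧ (a ≤ i ↔ a ≤ j) := by
  simp only [cutOver, Prod.mk.injEq] at h
  obtain ⟨hle, hlt⟩ := h
  have least_le (k : I) : k ≤ a ↔ leastIn S (Set.Ici k) ≤ ↑(⟨a, ha⟩ : S) :=
    (leastIn_le_iff (isUpperSet_Ici _) ⟨a, ha⟩).symm
  have least_lt (k : I) : k < a ↔ leastIn S (Set.Ioi k) ≤ ↑(⟨a, ha⟩ : S) :=
    (leastIn_le_iff (isUpperSet_Ioi _) ⟨a, ha⟩).symm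
  refine ⟨?_, ?_⟩
  · rw [least_le, least_le, hle]
  · rw [← not_lt, ← not_lt, least_lt, least_lt, hlt]

open Classical in
/-- `GapOrder.embed` copies `I` as the points `(i, true, i)`; the extension of a partial
embedding `σ` defined on `S` sends a point `i ∉ S` to `(σ s, false, i)` with `s` the least element
of `S` above `i`, just below the image of `s`. -/
noncomputable def gapExtend (S : Set I) (σ : I → I) (i : I) : GapOrder I :=
  if i ∈ S then GapOrder.embed (σ i)
  else toLex ((leastIn S (Set.Ioi i)).map (σ ∘ (↑)), toLex (false, i))

theorem strictMono_gapExtend {S : Set I} {σ : I → I} (hσ : StrictMonoOn σ S) :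
    StrictMono (gapExtend S σ) := by
  classical
  let g : S → I := σ ∘ (↑)
  have hg : StrictMono g := fun a b hab => hσ a.2 b.2 hab
  let next (i : I) : WithTop I := (leastIn S (Set.Ioi i)).map g
  have next_le_iff : ∀ i, ∀ s ∈ S, next i ≤ σ s ↔ i < s := fun i s hs => by
    change _ ≤ WithTop.map g ↑(⟨s, hs⟩ : S) ↔ _
    exact (WithTop.map_le_iff g hg.le_iff_le).trans (leastIn_le_iff (isUpperSet_Ioi _) ⟨s, hs⟩)
  have next_mono : Monotone next := fun i j hij => hg.withTop_map.monotone
    (leastIn_le_leastIn (isUpperSet_Ioi _) (isUpperSet_Ioi _) (Set.Ioi_subset_Ioi hij))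
  intro i j hij
  unfold gapExtend
  split_ifs with hi hj hj
  · exact GapOrder.embed.lt_iff_lt.2 (hσ hi hj hij)
  · refine Prod.Lex.toLex_lt_toLex.2 (Or.inl (lt_of_not_ge fun h => ?_))
    exact hij.not_gt ((next_le_iff j i hi).1 h)
  · rw [GapOrder.embed_apply]
    rcases ((next_le_iff i j hj).2 hij).lt_or_eq with h | h
    · exact Prod.Lex.toLex_lt_toLex.2 (Or.inl h)
    · exact Prod.Lex.toLex_lt_toLex.2
        (Or.inr ⟨h, Prod.Lex.toLex_lt_toLex.2 (Or.inl Bool.false_lt_true)⟩)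
  · rcases (next_mono hij.le).lt_or_eq with h | h
    · exact Prod.Lex.toLex_lt_toLex.2 (Or.inl h)
    · exact Prod.Lex.toLex_lt_toLex.2
        (Or.inr ⟨h, Prod.Lex.toLex_lt_toLex.2 (Or.inr ⟨rfl, hij⟩)⟩)

theorem StrictMonoOn.exists_orderEmbedding_gapOrder {S : Set I} {σ : I → I}
    (hσ : StrictMonoOn σ S) : ∃ f : I ↪o GapOrder I, ∀ i ∈ S, f i = GapOrder.embed (σ i) := by
  classical
  exact ⟨OrderEmbedding.ofStrictMono _ (strictMono_gapExtend hσ), fun i hi => if_pos hi⟩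

theorem exists_orderEmbedding_gapOrder {ι : Type*} (x y : ι → I)
    (hxy : ∀ k l, x k ≤ x l ↔ y k ≤ y l) :
    ∃ f : I ↪o GapOrder I, ∀ k, f (x k) = GapOrder.embed (y k) := by
  classical
  have hσ : ∀ k, Function.extend x y id (x k) = y k := by
    intro k
    have hex : ∃ l, x l = x k := ⟨k, rfl⟩
    rw [Function.extend_def, dif_pos hex]
    exact le_antisymm ((hxy _ _).1 hex.choose_spec.le) ((hxy _ _).1 hex.choose_spec.ge)
  have hmono : StrictMonoOn (Function.extend x y id) (Set.range x) := by
    rintro _ ⟨k, rfl⟩ _ ⟨l, rfl⟩ hkl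
    rw [hσ, hσ]
    exact lt_of_not_ge fun h => hkl.not_ge ((hxy l k).2 h)
  obtain ⟨f, hf⟩ := hmono.exists_orderEmbedding_gapOrder
  exact ⟨f, fun k => (hf _ ⟨k, rfl⟩).trans (congrArg _ (hσ k))⟩

/-- What the order type of `i` over `S` and the supports of the `P y` depends on; the cut of `i` in
`S` replaces its comparisons with the (possibly many) points of `S`. -/
noncomputable def orderLabel {L : FirstOrder.Language} {α : Type*} (S : Set I)
    (P : α → L.Pattern I) (i : I) : (WithTop S × WithTop S) × (α → L.Pattern (ULift.{u} Prop)) :=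
  (cutOver S i, fun y => (P y).map fun j => ULift.up (i ≤ j))

theorem exists_orderEmbedding_map_eq_map {L : FirstOrder.Language} {α : Type*} {S : Set I}
    {P Q : α → L.Pattern I} (h : ∀ x, (P x).map (orderLabel S P) = (Q x).map (orderLabel S Q)) :
    ∃ f : I ↪o GapOrder I, (∀ i ∈ S, f i = GapOrder.embed i) ∧
      ∀ x, (P x).map f = (Q x).map GapOrder.embed := by
  choose e hterm hlabel using fun x => Pattern.map_eq_map_iff.1 (h x)
  -- `S` is to be fixed and the support of each `P x` sent to that of `Q x`
  let xs : S ⊕ (Σ x, Fin (P x).1) → I := Sum.elim (↑) fun k => (P k.1).2.2 k.2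
  let ys : S ⊕ (Σ x, Fin (P x).1) → I := Sum.elim (↑) fun k => (Q k.1).2.2 (k.2.cast (e k.1))
  have hcut (k : Σ x, Fin (P x).1) (a : S) :=
    le_iff_le_of_cutOver_eq (congrArg Prod.fst (hlabel k.1 k.2)) a.2
  have hcmp (k l : Σ x, Fin (P x).1) : xs (.inr k) ≤ xs (.inr l) ↔ ys (.inr k) ≤ ys (.inr l) := by
    obtain ⟨_, -, hl⟩ :=
      Pattern.map_eq_map_iff.1 (congrFun (congrArg Prod.snd (hlabel k.1 k.2)) l.1)
    exact Iff.of_eq (ULift.up.inj (hl l.2))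
  obtain ⟨f, hf⟩ := exists_orderEmbedding_gapOrder xs ys (by
    rintro (a | k) (b | l)
    exacts [Iff.rfl, (hcut l a).2, (hcut k b).1, hcmp k l])
  exact ⟨f, fun i hi => hf (.inl ⟨i, hi⟩),
    fun x => Pattern.map_eq_map_iff.2 ⟨e x, hterm x, fun p => hf (.inr ⟨x, p⟩)⟩⟩

end WellOrder

namespace EMBlueprint

variable {K : AEC.{u}} (Φ : EMBlueprint K)

def realize (I : Type u) [LinearOrder I] (P : Φ.τΦ.Pattern I) : (Φ.EM I).carrier :=
  P.2.1.realize (Φ.emMap I ∘ P.2.2)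

theorem exists_realize_eq (I : Type u) [LinearOrder I] (z : (Φ.EM I).carrier) :
    ∃ P, Φ.realize I P = z := by
  classical
  obtain ⟨t, rfl⟩ := Substructure.mem_closure_iff_exists_term.1 (Φ.gen I ▸ Substructure.mem_top z)
  let e := t.varFinset.equivFin
  refine ⟨⟨_, t.restrictVar e, fun k => Set.rangeSplitting (Φ.emMap I) (e.symm k)⟩, ?_⟩
  exact Term.realize_restrictVar _ fun a => by simp [Set.apply_rangeSplitting]

noncomputable def pattern (I : Type u) [LinearOrder I] (z : (Φ.EM I).carrier) :
    Φ.τΦ.Pattern I :=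
  (Φ.exists_realize_eq I z).choose

theorem realize_pattern (I : Type u) [LinearOrder I] (z : (Φ.EM I).carrier) :
    Φ.realize I (Φ.pattern I z) = z :=
  (Φ.exists_realize_eq I z).choose_spec

variable {I J : Type u} [LinearOrder I] [LinearOrder J]

theorem emb_realize (f : I ↪o J) (P : Φ.τΦ.Pattern I) :
    Φ.emb I J f (Φ.realize I P) = Φ.realize J (P.map f) := by
  simp only [realize, Pattern.map, ← HomClass.realize_term]
  congr 1
  funext k
  exact Φ.emb_emMap I J f _

theorem emb_eq_emb_of_pattern_map_eq {z w : (Φ.EM I).carrier} {f g : I ↪o J}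
    (h : (Φ.pattern I z).map f = (Φ.pattern I w).map g) : Φ.emb I J f z = Φ.emb I J g w :=
  calc Φ.emb I J f z = Φ.realize J ((Φ.pattern I z).map f) := by rw [← emb_realize, realize_pattern]
    _ = Φ.emb I J g w := by rw [h, ← emb_realize, realize_pattern]

theorem exists_isKEmb_red (f : I ↪o J) :
    ∃ F : (Φ.red I).carrier ↪[K.τ] (Φ.red J).carrier, K.IsKEmb F ∧ ∀ x, F x = Φ.emb I J f x :=
  Φ.red_ssub I J f

end EMBlueprint

namespace AEC

variable {K : AEC.{u}}

theorem isKEmb_refl {N : ModelOf.{u} K.τ} (hN : N ∈ K.Mem) :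
    K.IsKEmb (Embedding.refl K.τ N.carrier) :=
  ⟨N, K.ssub_refl N hN, Language.Equiv.refl K.τ N.carrier, K.incl_refl N _⟩

theorem gtpEqOver_of_embeddings {M N R : ModelOf.{u} K.τ} (hM : M ∈ K.Mem) (hN : N ∈ K.Mem)
    (hR : R ∈ K.Mem) {h : M.carrier ↪[K.τ] N.carrier} (hh : K.IsKEmb h)
    {F G : N.carrier ↪[K.τ] R.carrier} (hF : K.IsKEmb F) (hG : K.IsKEmb G)
    {A : Set M.carrier} {α : Type v} {b c : α → M.carrier}
    (hA : ∀ a ∈ A, F (h a) = G (h a)) (hbc : ∀ x, F (h (b x)) = G (h (c x))) :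
    K.gtpEqOver hM A b c := by
  let image (d : α → M.carrier) : PTy K α A := ⟨N, hN, fun a => h a, fun x => h (d x)⟩
  have into (d : α → M.carrier) : K.gtpAtom ⟨M, hM, Subtype.val, d⟩ (image d) :=
    ⟨N, hN, h, Embedding.refl _ _, hh, isKEmb_refl hN, fun _ => rfl, fun _ => rfl⟩
  have across : K.gtpAtom (image b) (image c) :=
    ⟨R, hR, F, G, hF, hG, fun a => hA a a.2, hbc⟩
  exact .trans _ _ _ (.rel _ _ (into b))
    (.trans _ _ _ (.rel _ _ across) (.symm _ _ (.rel _ _ (into c))))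

theorem gSCard_le_of_isKEmb_red {Φ : EMBlueprint K} {μ : Cardinal.{u}} (hμ : ℵ₀ ≤ μ)
    (hΦ : Φ.τΦ.card ≤ μ) {I : Type u} [LinearOrder I] [WellFoundedLT I]
    {M : ModelOf.{u} K.τ} (hM : M ∈ K.Mem) {h : M.carrier ↪[K.τ] (Φ.red I).carrier}
    (hh : K.IsKEmb h) {A : Set M.carrier} (hA : #A ≤ μ) {α : Type u} (hα : μ ^ #α = μ) :
    K.gSCard hM A α ≤ μ := by
  let pat (m : M.carrier) := Φ.pattern I (h m)
  let S : Set I := ⋃ a : A, Set.range (pat a).2.2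
  let inv (b : α → M.carrier) (x : α) := (pat (b x)).map (orderLabel S fun y => pat (b y))
  refine (Cardinal.mk_quot_le_of_invariant inv fun b c hbc => ?_).trans ?_
  · obtain ⟨f, hfS, hfbc⟩ := exists_orderEmbedding_map_eq_map (congrFun hbc)
    obtain ⟨F, hF, hFe⟩ := Φ.exists_isKEmb_red f
    obtain ⟨G, hG, hGe⟩ := Φ.exists_isKEmb_red (GapOrder.embed (I := I))
    refine gtpEqOver_of_embeddings hM (Φ.red_mem' I) (Φ.red_mem' _) hh hF hG
      (fun a ha => ?_) fun x => ?_ <;> rw [hFe, hGe] <;>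
      refine Φ.emb_eq_emb_of_pattern_map_eq ?_
    · exact Pattern.map_congr fun p => hfS _ (Set.mem_iUnion.2 ⟨⟨a, ha⟩, p, rfl⟩)
    · exact hfbc x
  · have arrow {X : Type u} (hX : #X ≤ μ) : #(α → X) ≤ μ := by
      rw [← Cardinal.power_def]
      exact (Cardinal.power_le_power_right hX).trans hα.le
    have hS : #S ≤ μ := (Cardinal.mk_iUnion_le _).trans <| Cardinal.mul_le_of_le hμ hA <|
      ciSup_le' fun a => (Set.finite_range _).lt_aleph0.le.trans hμ
    have hcut : #(WithTop S) ≤ μ :=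
      Cardinal.mk_option.trans_le (Cardinal.add_le_of_le hμ hS (Cardinal.one_le_aleph0.trans hμ))
    have hProp : #(ULift.{u} Prop) ≤ μ := by
      simpa using (Cardinal.natCast_lt_aleph0 (n := 2)).le.trans hμ
    refine arrow (Pattern.card_le hμ hΦ ?_)
    rw [Cardinal.mk_prod, Cardinal.mk_prod, Cardinal.lift_id, Cardinal.lift_id, Cardinal.lift_id]
    exact Cardinal.mul_le_of_le hμ (Cardinal.mul_le_of_le hμ hcut hcut)
      (arrow (Pattern.card_le hμ hΦ hProp))

end AEC

theorem semisolvable_stability_general (K : AEC.{u}) (lam : Cardinal.{u})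
    (hs : K.Semisolvable lam) (μ κ : Cardinal.{u})
    (hμ1 : K.LS ≤ μ) (hμ2 : μ = μ ^ κ)
    (M : ModelOf.{u} K.τ) (hM : M ∈ K.Mem) (hMcard : #M.carrier = lam)
    (A : Set M.carrier) (hA : #↥A = μ) :
    K.gSCard hM A κ.ord.ToType ≤ μ := by
  obtain ⟨Φ, hΦ, hUniv⟩ := hs
  have hI : #lam.ord.ToType = lam := by rw [Cardinal.mk_toType, Cardinal.card_ord]
  obtain ⟨-, -, hEmb⟩ := hUniv lam.ord.ToType inferInstance hI
  obtain ⟨h, hh⟩ := hEmb M hM hMcard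
  have hκ : #κ.ord.ToType = κ := by rw [Cardinal.mk_toType, Cardinal.card_ord]
  exact K.gSCard_le_of_isKEmb_red (K.infinite_LS.trans hμ1) (hΦ.trans hμ1) hM hh hA.le
    (by rw [hκ, ← hμ2])

/-- Local stability in EM models: if `K` is semisolvable in `lam > LS (K)` then for any
model `M` of cardinality `lam`, any set `A ⊆ |M|` with `|A| = μ` (where `LS (K) ≤ μ`,
`μ = μ ^ κ`, `μ < lam`), there are at most `μ` Galois types of `κ`-tuples over `A` in `M`. -/
theorem semisolvable_stability (K : AEC.{u}) (lam : Cardinal.{u}) (h1 : K.LS < lam)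
    (hs : K.Semisolvable lam) (μ κ : Cardinal.{u})
    (hμ1 : K.LS ≤ μ) (hμ2 : μ = μ ^ κ) (hμ3 : μ < lam)
    (M : ModelOf.{u} K.τ) (hM : M ∈ K.Mem) (hMcard : #M.carrier = lam)
    (A : Set M.carrier) (hA : #↥A = μ) :
    K.gSCard hM A κ.ord.ToType ≤ μ :=
  semisolvable_stability_general K lam hs μ κ hμ1 hμ2 M hM hMcard A hA
end
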